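/- Let A : ℍ → ℍ be ℝ-linear and write A(x) = a(x) + b(x)i + c(x)j + d(x)k with a,b,c,d : ℍ → ℝ linear functionals. If A(ix)(ix) = -A(x)x for all x ∈ ℍ, then a(x) = b(ix), b(x) = -a(ix), c(x) = -d(ix), and d(x) = c(ix) for all x. -/

import Mathlib

def quatI : Quaternion ℝ := ⟨0, 1, 0, 0⟩

/-! In any ring with `u * u = -1`, an additive map `f` with `f (u x) (u x) = -f (x) x` satisfies
`f (u x) = f (x) u`: at `x = 1` the hypothesis gives `f u = f 1 * u`, and polarizing it at `x` and
`1` leaves `f (u x) u = -f x`. For `u = i` in `ℍ`, right multiplication by `i` permutes the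
coordinates up to sign, which gives the four relations. -/

section SquareRootOfMinusOne

variable {R : Type*} [Ring R] {u : R}

theorem eq_mul_of_mul_eq_neg (hu : u * u = -1) {y z : R} (h : y * u = -z) : y = z * u := by
  simpa only [mul_assoc, hu, mul_neg_one, neg_mul, neg_inj] using congrArg (· * u) h

theorem map_mul_left_eq_map_mul_right (f : R →+ R) (hu : u * u = -1)
    (h : ∀ x, f (u * x) * (u * x) = -(f x * x)) (x : R) : f (u * x) = f x * u := by
  have h_one : f u * u = -f 1 := by simpa using h 1
  have hf_u_mul : f u * (u * x) = -(f 1 * x) := by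
    rw [eq_mul_of_mul_eq_neg hu h_one, mul_assoc, ← mul_assoc u, hu, neg_one_mul, mul_neg]
  apply eq_mul_of_mul_eq_neg hu
  have hpolar := h (x + 1)
  simp only [mul_add, mul_one, map_add, add_mul, h x, hf_u_mul, h_one, neg_add] at hpolar
  exact add_right_cancel (add_left_cancel hpolar)

end SquareRootOfMinusOne

theorem mul_quatI (x : Quaternion ℝ) :
    x * quatI = (⟨-x.imI, x.re, x.imK, -x.imJ⟩ : Quaternion ℝ) := by
  ext <;> simp only [Quaternion.re_mul, Quaternion.imI_mul, Quaternion.imJ_mul, Quaternion.imK_mul]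
    <;> simp [quatI]

open Quaternion in
theorem quatI_mul_quatI : quatI * quatI = -1 := by
  rw [mul_quatI]
  ext <;> simp [quatI]

/-- Write an ℝ-linear `A : ℍ → ℍ` as `A(x) = a(x) + b(x)i + c(x)j + d(x)k`.
If `A(ix)(ix) = -A(x)x` for all `x`, then `a(x) = b(ix)`, `b(x) = -a(ix)`,
`c(x) = -d(ix)` and `d(x) = c(ix)`. -/
theorem stmt1 (A : Quaternion ℝ →ₗ[ℝ] Quaternion ℝ)
    (a b c d : Quaternion ℝ →ₗ[ℝ] ℝ)
    (hdecomp : ∀ x : Quaternion ℝ, A x = (⟨a x, b x, c x, d x⟩ : Quaternion ℝ))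
    (hhol : ∀ x : Quaternion ℝ, A (quatI * x) * (quatI * x) = -(A x * x)) :
    ∀ x : Quaternion ℝ,
      a x = b (quatI * x) ∧ b x = -(a (quatI * x)) ∧
      c x = -(d (quatI * x)) ∧ d x = c (quatI * x) := by
  intro x
  have h : A (quatI * x) = A x * quatI :=
    map_mul_left_eq_map_mul_right A.toAddMonoidHom quatI_mul_quatI hhol x
  rw [mul_quatI, hdecomp, hdecomp] at h
  obtain ⟨ha, hb, hc, hd⟩ := Quaternion.ext_iff.mp h
  exact ⟨hb.symm, neg_eq_iff_eq_neg.mp ha.symm, neg_eq_iff_eq_neg.mp hd.symm, hc.symm⟩
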